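/- arXiv:2301.11936 — 2 statements merged into one kernel-verified Lean document; each statement's English description precedes it below -/
import Mathlib

section
/- Let P be prime and r : ZMod P → ℂ with ∑_b |r(b)|² = 1 and ∑_b r(b) = 0. Define the linear map R from functions on (ZMod P)^D to functions on (ZMod P)^D × ZMod P by R[f](a,b) := P^{-D/2} ∑_x f(x) r(a·x − b). Then for every f with F_D[f](0) = 0 (i.e., ∑_x f(x) = 0), R is an isometry: ∑_{(a,b)} |R[f](a,b)|² = ∑_x |f(x)|². -/
open Complex Finset

noncomputable section

/-- The character `exp(-2πi c / P)` via the canonical representative. -/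
def ch {P : ℕ} (c : ZMod P) : ℂ :=
  Complex.exp (-2 * Real.pi * Complex.I * (c.val : ℂ) / (P : ℂ))

/-- The character `exp(2πi c / P)`. -/
def chI {P : ℕ} (c : ZMod P) : ℂ :=
  Complex.exp (2 * Real.pi * Complex.I * (c.val : ℂ) / (P : ℂ))

/-- Dot product in `ZMod P`. -/
def dotp {P D : ℕ} (a x : Fin D → ZMod P) : ZMod P := ∑ j, a j * x j

/-- `D`-dimensional discrete Fourier transform on `(ZMod P)^D`. -/
def Fd {P D : ℕ} [NeZero P] (f : (Fin D → ZMod P) → ℂ) (u : Fin D → ZMod P) : ℂ :=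
  (((P : ℝ) ^ (-(D : ℝ) / 2) : ℝ) : ℂ) * ∑ x : Fin D → ZMod P, f x * ch (dotp u x)

/-- 1-dimensional discrete Fourier transform on `ZMod P`. -/
def Fo {P : ℕ} [NeZero P] (h : ZMod P → ℂ) (v : ZMod P) : ℂ :=
  (((P : ℝ) ^ (-(1 : ℝ) / 2) : ℝ) : ℂ) * ∑ b : ZMod P, h b * ch (v * b)

/-- Inverse 1-dimensional discrete Fourier transform on `ZMod P`. -/
def FoInv {P : ℕ} [NeZero P] (H : ZMod P → ℂ) (b : ZMod P) : ℂ :=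
  (((P : ℝ) ^ (-(1 : ℝ) / 2) : ℝ) : ℂ) * ∑ v : ZMod P, H v * chI (v * b)

/-- Discrete ridgelet transform `R[f](a,b) = P^(-D/2) * ∑ f(x) r(a·x - b)`. -/
def Rt {P D : ℕ} [NeZero P] (f : (Fin D → ZMod P) → ℂ) (r : ZMod P → ℂ)
    (a : Fin D → ZMod P) (b : ZMod P) : ℂ :=
  (((P : ℝ) ^ (-(D : ℝ) / 2) : ℝ) : ℂ) * ∑ x : Fin D → ZMod P, f x * r (dotp a x - b)

/-- Discretized shallow neural network `S[w](x)`. -/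
def Snn {P D : ℕ} [NeZero P] (g : ZMod P → ℂ) (w : (Fin D → ZMod P) → ZMod P → ℂ)
    (x : Fin D → ZMod P) : ℂ :=
  (((P : ℝ) ^ (-(D : ℝ) / 2) : ℝ) : ℂ) *
    ∑ a : Fin D → ZMod P, ∑ b : ZMod P, w a b * g (dotp a x - b)

section RidgeletAux

set_option linter.unusedSectionVars false

variable {P D : ℕ} [Fact (Nat.Prime P)]

lemma dotp_sub (a x y : Fin D → ZMod P) : dotp a (x - y) = dotp a x - dotp a y := by
  simp [dotp, mul_sub, Finset.sum_sub_distrib]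

lemma dotp_add_left (a w z : Fin D → ZMod P) : dotp (a + w) z = dotp a z + dotp w z := by
  simp [dotp, add_mul, Finset.sum_add_distrib]

/-- Autocorrelation of `r`. -/
def Cc (r : ZMod P → ℂ) (t : ZMod P) : ℂ := ∑ c : ZMod P, r (t + c) * (starRingEnd ℂ) (r c)

lemma sum_shift (r : ZMod P → ℂ) (s t : ZMod P) :
    ∑ b : ZMod P, r (s - b) * (starRingEnd ℂ) (r (t - b)) = Cc r (s - t) := by
  rw [Cc]
  refine Fintype.sum_equiv (Equiv.subLeft t) _ _ (fun b => ?_)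
  simp only [Equiv.subLeft_apply]
  have h1 : s - t + (t - b) = s - b := by ring
  rw [h1]

lemma Cc_zero (r : ZMod P → ℂ) : Cc r 0 = ((∑ c : ZMod P, ‖r c‖ ^ 2 : ℝ) : ℂ) := by
  simp [Cc, Complex.mul_conj']

lemma Cc_total (r : ZMod P → ℂ) :
    ∑ t : ZMod P, Cc r t = (∑ b : ZMod P, r b) * (starRingEnd ℂ) (∑ b : ZMod P, r b) := by
  simp only [Cc]
  rw [map_sum, Finset.mul_sum, Finset.sum_comm]
  refine Finset.sum_congr rfl fun c _ => ?_
  rw [← Finset.sum_mul]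
  congr 1
  exact Fintype.sum_equiv (Equiv.addRight c) _ _ (fun t => rfl)

lemma sum_dotp_eq_zero (g : ZMod P → ℂ) (hg : ∑ t : ZMod P, g t = 0)
    (z : Fin D → ZMod P) (hz : z ≠ 0) :
    ∑ a : Fin D → ZMod P, g (dotp a z) = 0 := by
  obtain ⟨j, hj⟩ : ∃ j, z j ≠ 0 := by
    by_contra h
    push_neg at h
    exact hz (funext h)
  have h1 : ∀ a : Fin D → ZMod P, ∑ s : ZMod P, g (dotp a z + s * z j) = 0 := by
    intro a
    rw [← hg]
    refine Fintype.sum_equiv ((Equiv.mulRight₀ (z j) hj).trans (Equiv.addLeft (dotp a z))) _ _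
      (fun s => rfl)
  have h2 : ∀ s : ZMod P, ∑ a : Fin D → ZMod P, g (dotp a z + s * z j)
      = ∑ a : Fin D → ZMod P, g (dotp a z) := by
    intro s
    let w : Fin D → ZMod P := fun i => if i = j then s else 0
    have hw : dotp w z = s * z j := by
      simp [dotp, w, ite_mul, Finset.sum_ite_eq']
    refine Fintype.sum_equiv (Equiv.addRight w) _ _ (fun a => ?_)
    rw [Equiv.coe_addRight, dotp_add_left, hw]
  have h3 : (P : ℂ) * ∑ a : Fin D → ZMod P, g (dotp a z) = 0 := by
    calc (P : ℂ) * ∑ a : Fin D → ZMod P, g (dotp a z)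
        = ∑ s : ZMod P, ∑ a : Fin D → ZMod P, g (dotp a z + s * z j) := by
          simp [h2, ZMod.card]
      _ = ∑ a : Fin D → ZMod P, ∑ s : ZMod P, g (dotp a z + s * z j) := Finset.sum_comm
      _ = 0 := by simp [h1]
  have hP : (P : ℂ) ≠ 0 := by
    exact_mod_cast Nat.cast_ne_zero.mpr (Fact.out (p := Nat.Prime P)).ne_zero
  exact (mul_eq_zero.mp h3).resolve_left hP

end RidgeletAux

/-- The discrete ridgelet transform is an isometry on mean-zero functions when the
ridgelet function has mean zero and unit L2 norm. -/
theorem ridgelet_isometry (P D : ℕ) [Fact (Nat.Prime P)]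
    (r : ZMod P → ℂ) (hr0 : ∑ b : ZMod P, r b = 0)
    (hr1 : ∑ b : ZMod P, ‖r b‖ ^ 2 = 1)
    (f : (Fin D → ZMod P) → ℂ) (hf : ∑ x : Fin D → ZMod P, f x = 0) :
    ∑ a : Fin D → ZMod P, ∑ b : ZMod P, ‖Rt f r a b‖ ^ 2
      = ∑ x : Fin D → ZMod P, ‖f x‖ ^ 2 := by
  set c : ℝ := ((P : ℝ) ^ (-(D : ℝ) / 2) : ℝ) with hc_def
  have hCc0 : Cc r 0 = 1 := by
    rw [Cc_zero, hr1]; norm_num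
  have hA : ∀ z : Fin D → ZMod P,
      (∑ a : Fin D → ZMod P, Cc r (dotp a z)) = if z = 0 then ((P : ℂ) ^ D) else 0 := by
    intro z
    by_cases hz : z = 0
    · subst hz
      simp only [if_true]
      have hd : ∀ a : Fin D → ZMod P, dotp a (0 : Fin D → ZMod P) = 0 := by
        intro a; simp [dotp]
      simp [hd, hCc0, Finset.card_univ, ZMod.card]
    · rw [if_neg hz]
      refine sum_dotp_eq_zero (Cc r) ?_ z hz
      rw [Cc_total, hr0, zero_mul]
  have key : ∑ a : Fin D → ZMod P, ∑ b : ZMod P,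
      (Rt f r a b * (starRingEnd ℂ) (Rt f r a b))
      = ∑ x : Fin D → ZMod P, f x * (starRingEnd ℂ) (f x) := by
    have step1 : ∀ (a : Fin D → ZMod P) (b : ZMod P),
        Rt f r a b * (starRingEnd ℂ) (Rt f r a b)
        = ((c : ℂ) * (c : ℂ)) * ∑ x : Fin D → ZMod P, ∑ y : Fin D → ZMod P,
            (f x * (starRingEnd ℂ) (f y)) *
              (r (dotp a x - b) * (starRingEnd ℂ) (r (dotp a y - b))) := by
      intro a b
      simp only [Rt, map_mul, map_sum, Complex.conj_ofReal]
      rw [mul_mul_mul_comm, Finset.sum_mul_sum]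
      congr 1
      refine Finset.sum_congr rfl fun x _ => Finset.sum_congr rfl fun y _ => by ring
    have step2 : ∀ a : Fin D → ZMod P,
        ∑ b : ZMod P, ∑ x : Fin D → ZMod P, ∑ y : Fin D → ZMod P,
            (f x * (starRingEnd ℂ) (f y)) *
              (r (dotp a x - b) * (starRingEnd ℂ) (r (dotp a y - b)))
        = ∑ x : Fin D → ZMod P, ∑ y : Fin D → ZMod P,
            (f x * (starRingEnd ℂ) (f y)) * Cc r (dotp a (x - y)) := by
      intro a
      rw [Finset.sum_comm]
      refine Finset.sum_congr rfl fun x _ => ?_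
      rw [Finset.sum_comm]
      refine Finset.sum_congr rfl fun y _ => ?_
      rw [← Finset.mul_sum, sum_shift, ← dotp_sub]
    have step3 : ∑ a : Fin D → ZMod P, ∑ x : Fin D → ZMod P, ∑ y : Fin D → ZMod P,
          (f x * (starRingEnd ℂ) (f y)) * Cc r (dotp a (x - y))
        = ∑ x : Fin D → ZMod P, ∑ y : Fin D → ZMod P,
            (f x * (starRingEnd ℂ) (f y)) * (if x - y = 0 then ((P : ℂ) ^ D) else 0) := by
      rw [Finset.sum_comm]
      refine Finset.sum_congr rfl fun x _ => ?_
      rw [Finset.sum_comm]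
      refine Finset.sum_congr rfl fun y _ => ?_
      rw [← Finset.mul_sum, hA (x - y)]
    have step4 : ∑ x : Fin D → ZMod P, ∑ y : Fin D → ZMod P,
          (f x * (starRingEnd ℂ) (f y)) * (if x - y = 0 then ((P : ℂ) ^ D) else 0)
        = (P : ℂ) ^ D * ∑ x : Fin D → ZMod P, f x * (starRingEnd ℂ) (f x) := by
      rw [Finset.mul_sum]
      refine Finset.sum_congr rfl fun x _ => ?_
      rw [Finset.sum_eq_single x]
      · simp [mul_comm]
      · intro y _ hy
        rw [if_neg (by rw [sub_eq_zero]; exact fun h => hy h.symm), mul_zero]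
      · intro h; exact absurd (Finset.mem_univ x) h
    have hcc : ((c : ℂ) * (c : ℂ)) * (P : ℂ) ^ D = 1 := by
      have hPpos : (0 : ℝ) < (P : ℝ) := by
        exact_mod_cast (Fact.out (p := Nat.Prime P)).pos
      have hr : c * c * (P : ℝ) ^ D = 1 := by
        rw [hc_def, show ((P : ℝ) ^ D) = (P : ℝ) ^ (D : ℝ) from (Real.rpow_natCast _ D).symm,
          ← Real.rpow_add hPpos, ← Real.rpow_add hPpos]
        norm_num
      calc ((c : ℂ) * (c : ℂ)) * (P : ℂ) ^ D = ((c * c * (P : ℝ) ^ D : ℝ) : ℂ) := by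
            push_cast; ring
        _ = 1 := by rw [hr]; norm_num
    calc ∑ a : Fin D → ZMod P, ∑ b : ZMod P, (Rt f r a b * (starRingEnd ℂ) (Rt f r a b))
        = ∑ a : Fin D → ZMod P, ((c : ℂ) * (c : ℂ)) *
            ∑ b : ZMod P, ∑ x : Fin D → ZMod P, ∑ y : Fin D → ZMod P,
              (f x * (starRingEnd ℂ) (f y)) *
                (r (dotp a x - b) * (starRingEnd ℂ) (r (dotp a y - b))) := by
          refine Finset.sum_congr rfl fun a _ => ?_
          rw [Finset.mul_sum]
          exact Finset.sum_congr rfl fun b _ => step1 a b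
      _ = ((c : ℂ) * (c : ℂ)) * ∑ a : Fin D → ZMod P, ∑ x : Fin D → ZMod P,
            ∑ y : Fin D → ZMod P, (f x * (starRingEnd ℂ) (f y)) * Cc r (dotp a (x - y)) := by
          rw [Finset.mul_sum]
          exact Finset.sum_congr rfl fun a _ => by rw [step2 a]
      _ = ((c : ℂ) * (c : ℂ)) * ((P : ℂ) ^ D *
            ∑ x : Fin D → ZMod P, f x * (starRingEnd ℂ) (f x)) := by rw [step3, step4]
      _ = ∑ x : Fin D → ZMod P, f x * (starRingEnd ℂ) (f x) := by
          rw [← mul_assoc, hcc, one_mul]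
  have cast1 : ((∑ a : Fin D → ZMod P, ∑ b : ZMod P, ‖Rt f r a b‖ ^ 2 : ℝ) : ℂ)
      = ∑ a : Fin D → ZMod P, ∑ b : ZMod P, (Rt f r a b * (starRingEnd ℂ) (Rt f r a b)) := by
    push_cast
    simp [Complex.mul_conj']
  have cast2 : ((∑ x : Fin D → ZMod P, ‖f x‖ ^ 2 : ℝ) : ℂ)
      = ∑ x : Fin D → ZMod P, f x * (starRingEnd ℂ) (f x) := by
    push_cast
    simp [Complex.mul_conj']
  apply Complex.ofReal_inj.mp
  rw [cast1, key, ← cast2]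
end
end

section
/- Let g : ZMod P → ℂ with ∑_b g(b) = 0, i.e., F_1[g](0) = 0. Then for any f : (ZMod P)^D → ℂ and r : ZMod P → ℂ, ∑_{a ∈ (ZMod P)^D} ∑_{v ∈ ZMod P} F_D[f](v·a) · conj(F_1[r](v)) · F_1[g](v) · exp(2πi v (a·x)/P) = (∑_v F_1[g](v) conj(F_1[r](v))) · ∑_{a' ∈ (ZMod P)^D} F_D[f](a') · exp(2πi (a'·x)/P) for every x ∈ (ZMod P)^D, where P is prime. -/
open Complex Finset

noncomputable section

theorem Fo_zero_of_sum_eq_zero {P : ℕ} [NeZero P] {h : ZMod P → ℂ}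
    (hh : ∑ b : ZMod P, h b = 0) : Fo h 0 = 0 := by
  simp [Fo, ch, hh]

theorem dotp_mul_left {P D : ℕ} (v : ZMod P) (a x : Fin D → ZMod P) :
    dotp (fun j => v * a j) x = v * dotp a x := by
  simp only [dotp, mul_sum, mul_assoc]

theorem Fintype.sum_comp_mul_left_pi {K ι M : Type*} [GroupWithZero K] [Fintype K] [DecidableEq ι]
    [Fintype ι] [AddCommMonoid M] {v : K} (hv : v ≠ 0) (φ : (ι → K) → M) :
    ∑ a : ι → K, φ (fun j => v * a j) = ∑ a, φ a :=
  Fintype.sum_equiv (Equiv.piCongrRight fun _ => Equiv.mulLeft₀ v hv) _ _ fun _ => rfl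

theorem sum_Fd_mul_left_mul_chI {P D : ℕ} [Fact P.Prime] (f : (Fin D → ZMod P) → ℂ)
    (x : Fin D → ZMod P) {v : ZMod P} (hv : v ≠ 0) :
    ∑ a : Fin D → ZMod P, Fd f (fun j => v * a j) * chI (v * dotp a x)
      = ∑ a : Fin D → ZMod P, Fd f a * chI (dotp a x) := by
  simp only [← dotp_mul_left]
  exact Fintype.sum_comp_mul_left_pi hv fun a => Fd f a * chI (dotp a x)

/-- Central computation in the proof of the exact representation theorem: the
double sum over (a, v) factors through the admissibility constant. -/
theorem central_factorization (P D : ℕ) [Fact (Nat.Prime P)]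
    (g : ZMod P → ℂ) (hg : ∑ b : ZMod P, g b = 0)
    (f : (Fin D → ZMod P) → ℂ) (r : ZMod P → ℂ) (x : Fin D → ZMod P) :
    ∑ a : Fin D → ZMod P, ∑ v : ZMod P,
        Fd f (fun j => v * a j) * (starRingEnd ℂ) (Fo r v) * Fo g v
          * chI (v * dotp a x)
      = (∑ v : ZMod P, Fo g v * (starRingEnd ℂ) (Fo r v)) *
          ∑ a' : Fin D → ZMod P, Fd f a' * chI (dotp a' x) := by
  rw [sum_comm, sum_mul]
  refine sum_congr rfl fun v _ => ?_
  rcases eq_or_ne v 0 with rfl | hv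
  · simp [Fo_zero_of_sum_eq_zero hg]
  · rw [← sum_Fd_mul_left_mul_chI f x hv, mul_sum]
    exact sum_congr rfl fun a _ => by ring
end
end
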